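/- arXiv:1209.4095 — 2 statements merged into one kernel-verified Lean document; each statement's English description precedes it below -/
import Mathlib

section
/- Let B be an n×n exchange matrix and let (C_α : α ∈ A) be any nonempty family of B-cones. Then the intersection ⋂_{α∈A} C_α is a B-cone. -/
open scoped BigOperators

namespace MutationFanPaper

/-- An exchange matrix: a skew-symmetrizable `n × n` integer matrix. -/
def IsExchangeMatrix {n : ℕ} (B : Matrix (Fin n) (Fin n) ℤ) : Prop :=
  ∃ d : Fin n → ℤ, (∀ i, 0 < d i) ∧ ∀ i j, d i * B i j = -(d j * B j i)

/-- Matrix mutation in direction `k`. -/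
def mutate {n : ℕ} (B : Matrix (Fin n) (Fin n) ℤ) (k : Fin n) : Matrix (Fin n) (Fin n) ℤ :=
  fun i j =>
    if i = k ∨ j = k then -B i j
    else B i j + Int.sign (B k j) * max (B i k * B k j) 0

/-- The mutation map `η_k^B : ℝⁿ → ℝⁿ`. -/
noncomputable def etaStep {n : ℕ} (B : Matrix (Fin n) (Fin n) ℤ) (k : Fin n) (a : Fin n → ℝ) : Fin n → ℝ :=
  fun j =>
    if j = k then -a k
    else if 0 ≤ a k ∧ 0 ≤ B k j then a j + a k * (B k j : ℝ)
    else if a k ≤ 0 ∧ B k j ≤ 0 then a j - a k * (B k j : ℝ)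
    else a j

/-- `etaSeq B κ` is the mutation map `η_κ^B`, where the list `κ` records the indices in
order of application (the head of the list is applied first, using the matrix `B` itself). -/
noncomputable def etaSeq {n : ℕ} (B : Matrix (Fin n) (Fin n) ℤ) : List (Fin n) → (Fin n → ℝ) → Fin n → ℝ
  | [], a => a
  | k :: κ, a => etaSeq (mutate B k) κ (etaStep B k a)

/-- Iterated matrix mutation along a list of indices; the head is applied first. -/
def mutateSeq {n : ℕ} (B : Matrix (Fin n) (Fin n) ℤ) : List (Fin n) → Matrix (Fin n) (Fin n) ℤ
  | [] => B
  | k :: κ => mutateSeq (mutate B k) κ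

/-- The copy of ℤ inside ℝ, as a subring. -/
def intSR : Subring ℝ := (Int.castRingHom ℝ).range

/-- The copy of ℚ inside ℝ, as a subring. -/
noncomputable def ratSR : Subring ℝ := (Rat.castHom ℝ).range

/-- The formal expression `Σ_{i ∈ S} c i • v i` is a `B`-coherent linear relation. -/
def IsBCoherentRel {n : ℕ} (B : Matrix (Fin n) (Fin n) ℤ) {ι : Type*} (S : Finset ι)
    (v : ι → Fin n → ℝ) (c : ι → ℝ) : Prop :=
  ∀ κ : List (Fin n),
    (∑ i ∈ S, c i • etaSeq B κ (v i)) = 0 ∧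
    (∑ i ∈ S, c i • (fun j => min (etaSeq B κ (v i) j) 0)) = 0

/-- The formal expression `a - Σ_{i ∈ S} c i • v i` is a `B`-coherent linear relation. -/
def IsBCoherentDiff {n : ℕ} (B : Matrix (Fin n) (Fin n) ℤ) (a : Fin n → ℝ) {ι : Type*}
    (S : Finset ι) (v : ι → Fin n → ℝ) (c : ι → ℝ) : Prop :=
  ∀ κ : List (Fin n),
    (etaSeq B κ a - ∑ i ∈ S, c i • etaSeq B κ (v i)) = 0 ∧
    ((fun j => min (etaSeq B κ a j) 0) -
      ∑ i ∈ S, c i • (fun j => min (etaSeq B κ (v i) j) 0)) = 0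

/-- The family `b` is an `R`-spanning set for `B` (a family of vectors in `Rⁿ` such that every
`a ∈ Rⁿ` admits a `B`-coherent relation `a - Σ_{i ∈ S} c i • b i` with coefficients in `R`). -/
def SpanningOver {n : ℕ} (R : Subring ℝ) (B : Matrix (Fin n) (Fin n) ℤ) {ι : Type*}
    (b : ι → Fin n → ℝ) : Prop :=
  (∀ i j, b i j ∈ R) ∧
  ∀ a : Fin n → ℝ, (∀ j, a j ∈ R) →
    ∃ (S : Finset ι) (c : ι → ℝ), (∀ i ∈ S, c i ∈ R) ∧ IsBCoherentDiff B a S b c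

/-- The family `b` is an `R`-independent set for `B`. -/
def IndependentOver {n : ℕ} (R : Subring ℝ) (B : Matrix (Fin n) (Fin n) ℤ) {ι : Type*}
    (b : ι → Fin n → ℝ) : Prop :=
  (∀ i j, b i j ∈ R) ∧
  ∀ (S : Finset ι) (c : ι → ℝ), (∀ i ∈ S, c i ∈ R) → IsBCoherentRel B S b c →
    ∀ i ∈ S, c i = 0

/-- The family `b` is an `R`-basis for `B`. -/
def BasisOver {n : ℕ} (R : Subring ℝ) (B : Matrix (Fin n) (Fin n) ℤ) {ι : Type*}
    (b : ι → Fin n → ℝ) : Prop :=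
  SpanningOver R B b ∧ IndependentOver R B b

/-- The family `b` is a positive `R`-basis for `B`. -/
def PositiveBasisOver {n : ℕ} (R : Subring ℝ) (B : Matrix (Fin n) (Fin n) ℤ) {ι : Type*}
    (b : ι → Fin n → ℝ) : Prop :=
  BasisOver R B b ∧
  ∀ a : Fin n → ℝ, (∀ j, a j ∈ R) →
    ∃ (S : Finset ι) (c : ι → ℝ), (∀ i ∈ S, c i ∈ R ∧ 0 ≤ c i) ∧ IsBCoherentDiff B a S b c

/-- The relation `a ≡^B a'`: all mutation maps give componentwise equal signs. -/
def eqB {n : ℕ} (B : Matrix (Fin n) (Fin n) ℤ) (a a' : Fin n → ℝ) : Prop :=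
  ∀ (κ : List (Fin n)) (j : Fin n),
    Real.sign (etaSeq B κ a j) = Real.sign (etaSeq B κ a' j)

/-- A `B`-class: an equivalence class of `≡^B`. -/
def IsBClass {n : ℕ} (B : Matrix (Fin n) (Fin n) ℤ) (C : Set (Fin n → ℝ)) : Prop :=
  ∃ a, C = {a' | eqB B a a'}

/-- A `B`-cone: the closure of a `B`-class. -/
def IsBCone {n : ℕ} (B : Matrix (Fin n) (Fin n) ℤ) (C : Set (Fin n → ℝ)) : Prop :=
  ∃ D, IsBClass B D ∧ C = closure D

/-- A convex cone: a set closed under addition and positive scaling. -/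
def IsConvexCone {n : ℕ} (C : Set (Fin n → ℝ)) : Prop :=
  (∀ x ∈ C, ∀ y ∈ C, x + y ∈ C) ∧ ∀ x ∈ C, ∀ r : ℝ, 0 < r → r • x ∈ C

/-- `F` is a face of the convex cone `C`: a convex subset such that any line segment
contained in `C` whose interior meets `F` lies entirely in `F`. -/
def IsFaceOf {n : ℕ} (C F : Set (Fin n → ℝ)) : Prop :=
  F ⊆ C ∧ Convex ℝ F ∧
    ∀ x y : Fin n → ℝ, segment ℝ x y ⊆ C → (openSegment ℝ x y ∩ F).Nonempty →
      segment ℝ x y ⊆ F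

/-- The mutation fan `ℱ_B`: all `B`-cones and all faces of `B`-cones. -/
def MutFan {n : ℕ} (B : Matrix (Fin n) (Fin n) ℤ) : Set (Set (Fin n → ℝ)) :=
  {C | IsBCone B C ∨ ∃ D, IsBCone B D ∧ IsFaceOf D C}

/-- A fan: a collection of closed convex cones, closed under taking faces, in which the
intersection of any two cones is a face of each. -/
def IsFan {n : ℕ} (F : Set (Set (Fin n → ℝ))) : Prop :=
  (∀ C ∈ F, IsClosed C ∧ IsConvexCone C) ∧
  (∀ C ∈ F, ∀ G, IsFaceOf C G → G ∈ F) ∧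
  ∀ C ∈ F, ∀ D ∈ F, IsFaceOf C (C ∩ D) ∧ IsFaceOf D (C ∩ D)

/-- A set of vectors is sign-coherent if no two of its members have strictly opposite
signs in any coordinate. -/
def SignCoherentSet {n : ℕ} (S : Set (Fin n → ℝ)) : Prop :=
  ∀ x ∈ S, ∀ y ∈ S, ∀ j, ¬(x j < 0 ∧ 0 < y j)

/-- The ray spanned by a vector `v`. -/
def rayOf {n : ℕ} (v : Fin n → ℝ) : Set (Fin n → ℝ) :=
  {x | ∃ t : ℝ, 0 ≤ t ∧ x = t • v}

/-- `C` is a ray of the fan `F`: a one-dimensional cone belonging to `F`. -/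
def IsRayOf {n : ℕ} (F : Set (Set (Fin n → ℝ))) (C : Set (Fin n → ℝ)) : Prop :=
  C ∈ F ∧ ∃ v : Fin n → ℝ, v ≠ 0 ∧ C = rayOf v

/-- A simplicial cone: the nonnegative span of finitely many linearly independent vectors. -/
def IsSimplicialCone {n : ℕ} (C : Set (Fin n → ℝ)) : Prop :=
  ∃ (k : ℕ) (v : Fin k → Fin n → ℝ), LinearIndependent ℝ v ∧
    C = {x | ∃ c : Fin k → ℝ, (∀ i, 0 ≤ c i) ∧ x = ∑ i, c i • v i}

/-- A rational cone: the nonnegative span of finitely many rational vectors. -/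
def IsRationalCone {n : ℕ} (C : Set (Fin n → ℝ)) : Prop :=
  ∃ (k : ℕ) (v : Fin k → Fin n → ℝ), (∀ i j, ∃ q : ℚ, v i j = (q : ℝ)) ∧
    C = {x | ∃ c : Fin k → ℝ, (∀ i, 0 ≤ c i) ∧ x = ∑ i, c i • v i}

/-- `F'` is the rational part of the fan `F`. -/
def IsRationalPart {n : ℕ} (F F' : Set (Set (Fin n → ℝ))) : Prop :=
  IsFan F' ∧ (∀ C ∈ F', IsRationalCone C) ∧
  (∀ C ∈ F', ∃ D ∈ F, C ⊆ D) ∧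
  ∀ C ∈ F, ∃ D ∈ F', D ⊆ C ∧ (∀ D' ∈ F', D' ⊆ C → D' ⊆ D) ∧
    ∀ x ∈ C, (∀ j, ∃ q : ℚ, x j = (q : ℝ)) → x ∈ D

/-- `v` is the smallest nonzero integer vector in the cone `C`. -/
def IsSmallestIntVec {n : ℕ} (C : Set (Fin n → ℝ)) (v : Fin n → ℝ) : Prop :=
  v ∈ C ∧ v ≠ 0 ∧ (∀ j, ∃ m : ℤ, v j = (m : ℝ)) ∧
    ∀ w ∈ C, w ≠ 0 → (∀ j, ∃ m : ℤ, w j = (m : ℝ)) → ‖v‖ ≤ ‖w‖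

end MutationFanPaper

/-!
Mutation maps are piecewise linear, and every `η_κ` is additive on pairs of vectors that stay
sign-coherent under all mutations. Hence the closure of the `B`-class of `v` is the closed convex
cone of vectors whose coordinates, after every `η_κ`, weakly agree in sign with those of `v`, and
every `η_κ` is linear on it. An intersection `K` of such cones is again a closed convex cone of
pairwise sign-coherent vectors. A convergent sum, with positive weights, of one point of `K` for
each pair `(κ, j)` such that some point of `K` has nonzero `j`-th coordinate after `η_κ` is a point
`a ∈ K` that is nonzero wherever some point of `K` is; then `K` is the closure of the `B`-class
of `a`.
-/

namespace MutationFanPaper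

open Filter Topology

variable {n : ℕ}

lemma etaStep_apply (B : Matrix (Fin n) (Fin n) ℤ) (k : Fin n) (a : Fin n → ℝ) (j : Fin n) :
    etaStep B k a j = if j = k then -a k
      else if 0 ≤ B k j then a j + max (a k * B k j) 0
      else a j - max (a k * B k j) 0 := by
  unfold etaStep
  simp only [← Int.cast_nonneg_iff (R := ℝ), ← Int.cast_nonpos (R := ℝ)]
  generalize (B k j : ℝ) = b
  rcases le_total 0 (a k) with ha | ha <;> rcases le_total 0 b with hb | hb <;>
    simp only [max_def] <;> split_ifs <;> first | rfl | nlinarith | tauto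

lemma max_add_zero_of_mul_nonneg {p q : ℝ} (h : 0 ≤ p * q) :
    max (p + q) 0 = max p 0 + max q 0 := by
  rcases mul_nonneg_iff.mp h with ⟨hp, hq⟩ | ⟨hp, hq⟩
  · simp [hp, hq, add_nonneg hp hq]
  · simp [hp, hq, add_nonpos hp hq]

lemma etaStep_smul_add_smul (B : Matrix (Fin n) (Fin n) ℤ) (k : Fin n) {a a' : Fin n → ℝ}
    (h : 0 ≤ a k * a' k) {x y : ℝ} (hx : 0 ≤ x) (hy : 0 ≤ y) :
    etaStep B k (x • a + y • a') = x • etaStep B k a + y • etaStep B k a' := by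
  funext j
  have hmax : max ((x * a k + y * a' k) * B k j) 0
      = x * max (a k * B k j) 0 + y * max (a' k * B k j) 0 := by
    rw [add_mul, mul_assoc, mul_assoc, max_add_zero_of_mul_nonneg, mul_max_of_nonneg _ _ hx,
      mul_max_of_nonneg _ _ hy, mul_zero, mul_zero]
    have : 0 ≤ x * y * (B k j : ℝ) ^ 2 * (a k * a' k) := by positivity
    linarith
  simp only [etaStep_apply, Pi.add_apply, Pi.smul_apply, smul_eq_mul, hmax]
  split_ifs <;> ring

/-- The pairs on which every mutation map is additive (`etaSeq_add`). -/
def SignCoherent (B : Matrix (Fin n) (Fin n) ℤ) (a a' : Fin n → ℝ) : Prop :=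
  ∀ (κ : List (Fin n)) (j : Fin n), 0 ≤ etaSeq B κ a j * etaSeq B κ a' j

lemma etaSeq_smul_add_smul (κ : List (Fin n)) {B : Matrix (Fin n) (Fin n) ℤ} {a a' : Fin n → ℝ}
    (h : SignCoherent B a a') {x y : ℝ} (hx : 0 ≤ x) (hy : 0 ≤ y) :
    etaSeq B κ (x • a + y • a') = x • etaSeq B κ a + y • etaSeq B κ a' := by
  induction κ generalizing B a a' with
  | nil => rfl
  | cons k κ ih =>
    rw [etaSeq, etaStep_smul_add_smul B k (a := a) (a' := a') (h [] k) hx hy]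
    exact ih fun κ' j => h (k :: κ') j

lemma etaSeq_add (κ : List (Fin n)) {B : Matrix (Fin n) (Fin n) ℤ} {a a' : Fin n → ℝ}
    (h : SignCoherent B a a') : etaSeq B κ (a + a') = etaSeq B κ a + etaSeq B κ a' := by
  simpa using etaSeq_smul_add_smul κ h zero_le_one zero_le_one

lemma etaSeq_smul (κ : List (Fin n)) (B : Matrix (Fin n) (Fin n) ℤ) (a : Fin n → ℝ) {t : ℝ}
    (ht : 0 ≤ t) : etaSeq B κ (t • a) = t • etaSeq B κ a := by
  simpa using etaSeq_smul_add_smul κ (a := a) (a' := a) (fun _ _ => mul_self_nonneg _) ht le_rfl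

lemma etaSeq_zero (κ : List (Fin n)) (B : Matrix (Fin n) (Fin n) ℤ) :
    etaSeq B κ 0 = 0 := by
  simpa using etaSeq_smul κ B 0 le_rfl

lemma continuous_etaStep (B : Matrix (Fin n) (Fin n) ℤ) (k : Fin n) :
    Continuous (etaStep B k) := by
  refine continuous_pi fun j => ?_
  simp only [etaStep_apply]
  split_ifs <;> fun_prop

lemma continuous_etaSeq (κ : List (Fin n)) (B : Matrix (Fin n) (Fin n) ℤ) :
    Continuous (etaSeq B κ) := by
  induction κ generalizing B with
  | nil => exact continuous_id
  | cons k κ ih => exact (ih (mutate B k)).comp (continuous_etaStep B k)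

lemma nonneg_of_sign_eq {u w : ℝ} (h : Real.sign u = Real.sign w) (hu : 0 ≤ u) : 0 ≤ w := by
  by_contra! hw
  rw [Real.sign_of_neg hw] at h
  rcases hu.eq_or_lt with rfl | hu
  · simp at h
  · rw [Real.sign_of_pos hu] at h
    norm_num at h

/-- The closure of the `B`-class of `v` (see `closure_setOf_eqB`). -/
def bCone (B : Matrix (Fin n) (Fin n) ℤ) (v : Fin n → ℝ) : Set (Fin n → ℝ) :=
  {x | ∀ (κ : List (Fin n)) (j : Fin n),
    (0 ≤ etaSeq B κ v j → 0 ≤ etaSeq B κ x j) ∧ (etaSeq B κ v j ≤ 0 → etaSeq B κ x j ≤ 0)}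

section bCone

variable {B : Matrix (Fin n) (Fin n) ℤ} {v w x y : Fin n → ℝ}

lemma self_mem_bCone : v ∈ bCone B v := fun _ _ => ⟨id, id⟩

lemma bCone_subset_of_mem (hw : w ∈ bCone B v) : bCone B w ⊆ bCone B v :=
  fun _ hx κ j => ⟨fun h => (hx κ j).1 ((hw κ j).1 h), fun h => (hx κ j).2 ((hw κ j).2 h)⟩

lemma signCoherent_of_mem_bCone (hx : x ∈ bCone B v) (hy : y ∈ bCone B v) :
    SignCoherent B x y := by
  intro κ j
  rcases le_total 0 (etaSeq B κ v j) with h | h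
  · exact mul_nonneg ((hx κ j).1 h) ((hy κ j).1 h)
  · exact mul_nonneg_of_nonpos_of_nonpos ((hx κ j).2 h) ((hy κ j).2 h)

lemma zero_mem_bCone : (0 : Fin n → ℝ) ∈ bCone B v := by
  intro κ j
  simp [etaSeq_zero]

lemma add_mem_bCone (hx : x ∈ bCone B v) (hy : y ∈ bCone B v) : x + y ∈ bCone B v := by
  intro κ j
  rw [etaSeq_add κ (signCoherent_of_mem_bCone hx hy), Pi.add_apply]
  exact ⟨fun h => add_nonneg ((hx κ j).1 h) ((hy κ j).1 h),
    fun h => add_nonpos ((hx κ j).2 h) ((hy κ j).2 h)⟩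

lemma smul_mem_bCone (hx : x ∈ bCone B v) {t : ℝ} (ht : 0 ≤ t) : t • x ∈ bCone B v := by
  intro κ j
  rw [etaSeq_smul κ B x ht, Pi.smul_apply, smul_eq_mul]
  exact ⟨fun h => mul_nonneg ht ((hx κ j).1 h),
    fun h => mul_nonpos_of_nonneg_of_nonpos ht ((hx κ j).2 h)⟩

lemma isClosed_bCone : IsClosed (bCone B v) := by
  simp only [bCone, Set.ofPred_forall, Set.ofPred_and]
  refine isClosed_iInter fun κ => isClosed_iInter fun j => IsClosed.inter ?_ ?_ <;>
    refine isClosed_iInter fun _ => isClosed_le ?_ ?_ <;>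
    first | exact continuous_const | exact (continuous_apply j).comp (continuous_etaSeq κ B)

lemma mem_bCone_of_eqB (h : eqB B v x) : x ∈ bCone B v := by
  intro κ j
  refine ⟨nonneg_of_sign_eq (h κ j), fun hv => ?_⟩
  simpa using nonneg_of_sign_eq (u := -etaSeq B κ v j) (w := -etaSeq B κ x j)
    (by simp [Real.sign_neg, h κ j]) (neg_nonneg.mpr hv)

lemma mem_bCone_of_signCoherent (h : SignCoherent B v x)
    (hsupp : ∀ κ j, etaSeq B κ x j ≠ 0 → etaSeq B κ v j ≠ 0) : x ∈ bCone B v := by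
  intro κ j
  have hprod := h κ j
  constructor <;> intro hv <;> by_contra! hx
  · have := lt_of_le_of_ne hv (hsupp κ j hx.ne).symm
    nlinarith
  · have := lt_of_le_of_ne hv (hsupp κ j hx.ne')
    nlinarith

lemma eqB_smul_add (hx : x ∈ bCone B v) {t : ℝ} (ht : 0 < t) : eqB B v (t • v + x) := by
  intro κ j
  have hcoh := signCoherent_of_mem_bCone (self_mem_bCone (B := B) (v := v)) hx
  rw [← one_smul ℝ x, etaSeq_smul_add_smul κ hcoh ht.le zero_le_one]
  simp only [one_smul, Pi.add_apply, Pi.smul_apply, smul_eq_mul]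
  rcases lt_trichotomy (etaSeq B κ v j) 0 with hv | hv | hv
  · have := (hx κ j).2 hv.le
    rw [Real.sign_of_neg hv, Real.sign_of_neg (by nlinarith)]
  · rw [hv, le_antisymm ((hx κ j).2 hv.le) ((hx κ j).1 hv.ge)]
    simp
  · have := (hx κ j).1 hv.le
    rw [Real.sign_of_pos hv, Real.sign_of_pos (by nlinarith)]

lemma closure_setOf_eqB : closure {x | eqB B v x} = bCone B v := by
  refine (closure_minimal (fun x => mem_bCone_of_eqB) isClosed_bCone).antisymm fun x hx => ?_
  have hlim : Tendsto (fun t : ℝ => t • v + x) (𝓝[>] 0) (𝓝 x) := by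
    have : Tendsto (fun t : ℝ => t • v + x) (𝓝 0) (𝓝 ((0 : ℝ) • v + x)) :=
      (Continuous.tendsto (by fun_prop) 0)
    simpa using this.mono_left nhdsWithin_le_nhds
  exact mem_closure_of_tendsto hlim
    (eventually_nhdsWithin_of_forall fun t ht => eqB_smul_add hx ht)

end bCone

section GenericPoint

variable {ι : Type*}

lemma ne_zero_of_hasSum_of_mul_nonneg {t : ι → ℝ} {S : ℝ} (h : HasSum t S) {i₀ : ι}
    (hi₀ : t i₀ ≠ 0) (hcoh : ∀ i, 0 ≤ t i₀ * t i) : S ≠ 0 := by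
  have : t i₀ * t i₀ ≤ t i₀ * S := le_hasSum (h.mul_left (t i₀)) i₀ fun i _ => hcoh i
  rintro rfl
  exact hi₀ (mul_self_eq_zero.mp (le_antisymm (by simpa using this) (mul_self_nonneg _)))

lemma map_sum_of_additiveOn {M N : Type*} [AddCommMonoid M] [AddCommMonoid N] {K : Set M}
    (φ : M → N) (h0 : 0 ∈ K) (hadd : ∀ x ∈ K, ∀ y ∈ K, x + y ∈ K) (hφ0 : φ 0 = 0)
    (hφadd : ∀ x ∈ K, ∀ y ∈ K, φ (x + y) = φ x + φ y) {f : ι → M} (hf : ∀ i, f i ∈ K)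
    (s : Finset ι) : φ (∑ i ∈ s, f i) = ∑ i ∈ s, φ (f i) := by
  classical
  induction s using Finset.induction_on with
  | empty => simpa using hφ0
  | insert i s hi ih =>
    have hs : ∑ i ∈ s, f i ∈ K :=
      Finset.sum_induction f (· ∈ K) (fun x y hx hy => hadd x hx y hy) h0 fun i _ => hf i
    rw [Finset.sum_insert hi, Finset.sum_insert hi, hφadd _ (hf i) _ hs, ih]

variable {E : Type*} [NormedAddCommGroup E] [NormedSpace ℝ E] [CompleteSpace E]

lemma exists_pos_summable_smul [Countable ι] (w : ι → E) :
    ∃ ε : ι → ℝ, (∀ i, 0 < ε i) ∧ Summable fun i => ε i • w i := by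
  cases nonempty_encodable ι
  obtain ⟨δ, hδ, c, hc, -⟩ := posSumOfEncodable one_pos ι
  refine ⟨fun i => δ i / (1 + ‖w i‖), fun i => by have := hδ i; positivity,
    Summable.of_norm_bounded hc.summable fun i => ?_⟩
  have := hδ i
  rw [norm_smul, Real.norm_of_nonneg (by positivity), div_mul_eq_mul_div,
    div_le_iff₀ (by positivity)]
  nlinarith [norm_nonneg (w i)]

theorem exists_mem_support_maximal [Countable ι] {K : Set E} (hK : IsClosed K)
    (h0 : 0 ∈ K) (hadd : ∀ x ∈ K, ∀ y ∈ K, x + y ∈ K)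
    (hsmul : ∀ x ∈ K, ∀ t : ℝ, 0 ≤ t → t • x ∈ K) (φ : ι → E → ℝ)
    (hφc : ∀ i, Continuous (φ i)) (hφadd : ∀ i, ∀ x ∈ K, ∀ y ∈ K, φ i (x + y) = φ i x + φ i y)
    (hφsmul : ∀ i, ∀ x ∈ K, ∀ t : ℝ, 0 ≤ t → φ i (t • x) = t * φ i x)
    (hφcoh : ∀ i, ∀ x ∈ K, ∀ y ∈ K, 0 ≤ φ i x * φ i y) :
    ∃ a ∈ K, ∀ i, ∀ y ∈ K, φ i y ≠ 0 → φ i a ≠ 0 := by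
  have hφ0 : ∀ i, φ i 0 = 0 := fun i => by simpa using hφsmul i 0 h0 0 le_rfl
  have hw : ∀ i, ∃ w ∈ K, (∃ y ∈ K, φ i y ≠ 0) → φ i w ≠ 0 := fun i => by
    by_cases h : ∃ y ∈ K, φ i y ≠ 0
    · obtain ⟨y, hy, hy0⟩ := h
      exact ⟨y, hy, fun _ => hy0⟩
    · exact ⟨0, h0, fun h' => absurd h' h⟩
  choose w hwK hw0 using hw
  obtain ⟨ε, hε, hsum⟩ := exists_pos_summable_smul w
  set f := fun i => ε i • w i
  have hfK : ∀ i, f i ∈ K := fun i => hsmul _ (hwK i) _ (hε i).le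
  have hpartial : ∀ s : Finset ι, ∑ i ∈ s, f i ∈ K := fun s =>
    Finset.sum_induction f (· ∈ K) (fun x y hx hy => hadd x hx y hy) h0 fun i _ => hfK i
  refine ⟨∑' i, f i, hK.mem_of_tendsto hsum.hasSum (Eventually.of_forall hpartial),
    fun i y hy hφy => ?_⟩
  have hφsum : HasSum (fun p => φ i (f p)) (φ i (∑' p, f p)) := by
    have := ((hφc i).tendsto _).comp hsum.hasSum
    simp only [Function.comp_def, map_sum_of_additiveOn (φ i) h0 hadd (hφ0 i) (hφadd i) hfK]
      at this
    exact this
  refine ne_zero_of_hasSum_of_mul_nonneg hφsum (i₀ := i) ?_ fun p => hφcoh i _ (hfK i) _ (hfK p)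
  rw [hφsmul i _ (hwK i) _ (hε i).le]
  exact mul_ne_zero (hε i).ne' (hw0 i ⟨y, hy, hφy⟩)

end GenericPoint

lemma IsBCone.exists_eq_bCone {B : Matrix (Fin n) (Fin n) ℤ} {C : Set (Fin n → ℝ)}
    (hC : IsBCone B C) : ∃ v, C = bCone B v := by
  obtain ⟨D, ⟨v, rfl⟩, rfl⟩ := hC
  exact ⟨v, closure_setOf_eqB⟩

lemma exists_iInter_bCone_eq {A : Type*} [Nonempty A] (B : Matrix (Fin n) (Fin n) ℤ)
    (a : A → Fin n → ℝ) : ∃ a₀, ⋂ α, bCone B (a α) = bCone B a₀ := by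
  set K := ⋂ α, bCone B (a α)
  obtain ⟨α₀⟩ := ‹Nonempty A›
  have hK : ∀ x ∈ K, x ∈ bCone B (a α₀) := fun x hx => Set.mem_iInter.mp hx α₀
  have hcoh : ∀ x ∈ K, ∀ y ∈ K, SignCoherent B x y := fun x hx y hy =>
    signCoherent_of_mem_bCone (hK x hx) (hK y hy)
  obtain ⟨a₀, ha₀, hgen⟩ := exists_mem_support_maximal (K := K)
    (isClosed_iInter fun α => isClosed_bCone) (Set.mem_iInter.mpr fun α => zero_mem_bCone)
    (fun x hx y hy => Set.mem_iInter.mpr fun α =>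
      add_mem_bCone (Set.mem_iInter.mp hx α) (Set.mem_iInter.mp hy α))
    (fun x hx t ht => Set.mem_iInter.mpr fun α => smul_mem_bCone (Set.mem_iInter.mp hx α) ht)
    (fun (p : List (Fin n) × Fin n) x => etaSeq B p.1 x p.2)
    (fun p => (continuous_apply p.2).comp (continuous_etaSeq p.1 B))
    (fun p x hx y hy => by simp [etaSeq_add p.1 (hcoh x hx y hy)])
    (fun p x _ t ht => by simp [etaSeq_smul p.1 B x ht])
    (fun p x hx y hy => hcoh x hx y hy p.1 p.2)
  refine ⟨a₀, subset_antisymm (fun x hx => ?_) ?_⟩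
  · exact mem_bCone_of_signCoherent (hcoh a₀ ha₀ x hx) fun κ j => hgen (κ, j) x hx
  · exact Set.subset_iInter fun α => bCone_subset_of_mem (Set.mem_iInter.mp ha₀ α)

theorem iInter_bCone_general {n : ℕ} (B : Matrix (Fin n) (Fin n) ℤ) {A : Type} [Nonempty A]
    (C : A → Set (Fin n → ℝ)) (hC : ∀ α, IsBCone B (C α)) :
    IsBCone B (⋂ α, C α) := by
  choose a ha using fun α => (hC α).exists_eq_bCone
  obtain ⟨a₀, h⟩ := exists_iInter_bCone_eq B a
  exact ⟨{x | eqB B a₀ x}, ⟨a₀, rfl⟩, by rw [closure_setOf_eqB, ← h, Set.iInter_congr ha]⟩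

/-- An arbitrary (nonempty) intersection of `B`-cones is a `B`-cone. -/
theorem iInter_bCone {n : ℕ} (hn : 1 ≤ n) (B : Matrix (Fin n) (Fin n) ℤ)
    (hB : IsExchangeMatrix B) {A : Type} [Nonempty A]
    (C : A → Set (Fin n → ℝ)) (hC : ∀ α, IsBCone B (C α)) :
    IsBCone B (⋂ α, C α) :=
  iInter_bCone_general B C hC

end MutationFanPaper
end

section
/- Let B be an n×n exchange matrix, let R be one of ℤ, ℚ, ℝ, and suppose (b_i : i ∈ I) and (b'_j : j ∈ J) are both positive R-bases for B. Then they agree up to scaling each basis element by a positive unit of R: there is a bijection σ : I → J and positive units u_i of R with b'_{σ(i)} = u_i·b_i for all i ∈ I. -/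
open scoped BigOperators

namespace MutationFanPaper

/-!
Write each basis vector of `b` as a nonnegative coherent combination `b i = ∑ c i j • b' j` of
the other basis, and vice versa with coefficients `d`. Substituting one expansion into the other
is again a coherent relation, so by independence the coefficient matrices satisfy `c d = 1` and
`d c = 1`. Two mutually inverse matrices with nonnegative entries are monomial: each row of `c`
has a single nonzero entry, which yields the bijection, and the scalars are inverse entries of
`c` and `d`, hence units of `R`.
-/

section MonomialOfNonnegInverse

variable {𝕜 : Type*} [Semiring 𝕜] [LinearOrder 𝕜] [IsStrictOrderedRing 𝕜]
  {I J : Type*} [DecidableEq I] {c : I → J → 𝕜} {d : J → I → 𝕜} {S : I → Finset J}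

theorem exists_pos_pos_of_sum_mul_eq_single (hc : ∀ i j, 0 ≤ c i j) (hd : ∀ j i, 0 ≤ d j i)
    (hcd : ∀ i k, ∑ j ∈ S i, c i j * d j k = (Pi.single i 1 : I → 𝕜) k) (i : I) :
    ∃ j, 0 < c i j ∧ 0 < d j i := by
  have hne : ∑ j ∈ S i, c i j * d j i ≠ 0 := by simp [hcd]
  obtain ⟨j, -, hj⟩ := Finset.exists_ne_zero_of_sum_ne_zero hne
  exact ⟨j, (hc i j).lt_of_ne' (left_ne_zero_of_mul hj),
    (hd j i).lt_of_ne' (right_ne_zero_of_mul hj)⟩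

theorem eq_of_pos_of_pos_of_sum_mul_eq_single (hc : ∀ i j, 0 ≤ c i j) (hd : ∀ j i, 0 ≤ d j i)
    (hcS : ∀ i, ∀ j ∉ S i, c i j = 0)
    (hcd : ∀ i k, ∑ j ∈ S i, c i j * d j k = (Pi.single i 1 : I → 𝕜) k)
    ⦃i k : I⦄ ⦃j : J⦄ (hij : 0 < c i j) (hjk : 0 < d j k) : k = i := by
  by_contra hki
  have hzero : ∑ j' ∈ S i, c i j' * d j' k = 0 := by simp [hcd, hki]
  have hjS : j ∈ S i := by_contra fun hj => hij.ne' (hcS i j hj)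
  exact (mul_pos hij hjk).ne'
    ((Finset.sum_eq_zero_iff_of_nonneg fun j' _ => mul_nonneg (hc i j') (hd j' k)).1 hzero j hjS)

theorem exists_equiv_of_sum_mul_eq_single [DecidableEq J] {T : J → Finset I}
    (hc : ∀ i j, 0 ≤ c i j) (hd : ∀ j i, 0 ≤ d j i)
    (hcS : ∀ i, ∀ j ∉ S i, c i j = 0) (hdT : ∀ j, ∀ i ∉ T j, d j i = 0)
    (hcd : ∀ i k, ∑ j ∈ S i, c i j * d j k = (Pi.single i 1 : I → 𝕜) k)
    (hdc : ∀ j l, ∑ i ∈ T j, d j i * c i l = (Pi.single j 1 : J → 𝕜) l) :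
    ∃ σ : I ≃ J, ∀ i, 0 < d (σ i) i ∧ c i (σ i) * d (σ i) i = 1 ∧ ∀ k ≠ i, d (σ i) k = 0 := by
  choose σ hσc hσd using exists_pos_pos_of_sum_mul_eq_single hc hd hcd
  choose τ hτd using fun j =>
    (exists_pos_pos_of_sum_mul_eq_single hd hc hdc j).imp fun _ => And.left
  have hcd_eq := eq_of_pos_of_pos_of_sum_mul_eq_single hc hd hcS hcd
  have hdc_eq := eq_of_pos_of_pos_of_sum_mul_eq_single hd hc hdT hdc
  refine ⟨⟨σ, τ, fun i => hcd_eq (hσc i) (hτd (σ i)), fun j => hdc_eq (hτd j) (hσc (τ j))⟩,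
    fun i => ⟨hσd i, ?_, fun k hk => ?_⟩⟩
  · have hσS : σ i ∈ S i := by_contra fun h => (hσc i).ne' (hcS i _ h)
    refine (Finset.sum_eq_single_of_mem (f := fun j => c i j * d j i) _ hσS
      fun j _ hj => ?_).symm.trans (by simp [hcd])
    rcases (hc i j).eq_or_lt with h | h
    · rw [← h, zero_mul]
    rcases (hd j i).eq_or_lt with h' | h'
    · rw [← h', mul_zero]
    exact absurd (hdc_eq h' (hσc i)).symm hj
  · rcases (hd (σ i) k).eq_or_lt with h | h
    · exact h.symm
    · exact absurd (hcd_eq (hσc i) h) hk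

end MonomialOfNonnegInverse

section Coherence

variable {n : ℕ} {B : Matrix (Fin n) (Fin n) ℤ} {ι ι' : Type*} {a : Fin n → ℝ}
  {S : Finset ι} {v : ι → Fin n → ℝ} {c : ι → ℝ}

def IsCoherenceTest (B : Matrix (Fin n) (Fin n) ℤ) (X : (Fin n → ℝ) → Fin n → ℝ) : Prop :=
  ∃ κ, X = etaSeq B κ ∨ X = fun x j => min (etaSeq B κ x j) 0

theorem isBCoherentDiff_iff :
    IsBCoherentDiff B a S v c ↔ ∀ X, IsCoherenceTest B X → X a = ∑ i ∈ S, c i • X (v i) := by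
  refine ⟨?_, fun h κ => ⟨sub_eq_zero.2 (h _ ⟨κ, .inl rfl⟩), sub_eq_zero.2 (h _ ⟨κ, .inr rfl⟩)⟩⟩
  rintro h X ⟨κ, rfl | rfl⟩
  exacts [sub_eq_zero.1 (h κ).1, sub_eq_zero.1 (h κ).2]

theorem isBCoherentRel_iff :
    IsBCoherentRel B S v c ↔ ∀ X, IsCoherenceTest B X → ∑ i ∈ S, c i • X (v i) = 0 := by
  refine ⟨?_, fun h κ => ⟨h _ ⟨κ, .inl rfl⟩, h _ ⟨κ, .inr rfl⟩⟩⟩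
  rintro h X ⟨κ, rfl | rfl⟩
  exacts [(h κ).1, (h κ).2]

theorem IsBCoherentDiff.eq_sum (h : IsBCoherentDiff B a S v c) : a = ∑ i ∈ S, c i • v i :=
  sub_eq_zero.1 (h []).1

theorem isBCoherentDiff_single [DecidableEq ι] (v : ι → Fin n → ℝ) (i : ι) :
    IsBCoherentDiff B (v i) {i} v (Pi.single i 1) :=
  isBCoherentDiff_iff.2 fun X _ => by simp

theorem IsBCoherentDiff.comp [DecidableEq ι] {T : Finset ι'} {w : ι' → Fin n → ℝ} {e : ι' → ℝ}
    {S : ι' → Finset ι} {c : ι' → ι → ℝ} (ha : IsBCoherentDiff B a T w e)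
    (hw : ∀ j ∈ T, IsBCoherentDiff B (w j) (S j) v (c j)) (hcS : ∀ j, ∀ i ∉ S j, c j i = 0) :
    IsBCoherentDiff B a (T.biUnion S) v (fun i => ∑ j ∈ T, e j * c j i) := by
  rw [isBCoherentDiff_iff] at ha ⊢
  intro X hX
  have hw' : ∀ j ∈ T, X (w j) = ∑ i ∈ T.biUnion S, c j i • X (v i) := fun j hj => by
    rw [isBCoherentDiff_iff.1 (hw j hj) X hX]
    exact Finset.sum_subset (Finset.subset_biUnion_of_mem S hj)
      fun i _ hi => by rw [hcS j i hi, zero_smul]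
  rw [ha X hX, Finset.sum_congr rfl fun j hj => by rw [hw' j hj]]
  simp only [Finset.smul_sum, smul_smul, Finset.sum_smul]
  exact Finset.sum_comm

theorem IsBCoherentDiff.sub [DecidableEq ι] {S₁ S₂ : Finset ι} {c₁ c₂ : ι → ℝ}
    (h₁ : IsBCoherentDiff B a S₁ v c₁) (h₂ : IsBCoherentDiff B a S₂ v c₂)
    (hc₁ : ∀ i ∉ S₁, c₁ i = 0) (hc₂ : ∀ i ∉ S₂, c₂ i = 0) :
    IsBCoherentRel B (S₁ ∪ S₂) v (c₁ - c₂) := by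
  rw [isBCoherentDiff_iff] at h₁ h₂
  refine isBCoherentRel_iff.2 fun X hX => ?_
  have extend : ∀ {S' : Finset ι} {c' : ι → ℝ}, S' ⊆ S₁ ∪ S₂ → (∀ i ∉ S', c' i = 0) →
      X a = ∑ i ∈ S', c' i • X (v i) → ∑ i ∈ S₁ ∪ S₂, c' i • X (v i) = X a := by
    intro S' c' hS hc h
    rw [h]
    exact (Finset.sum_subset hS fun i _ hi => by rw [hc i hi, zero_smul]).symm
  simp only [Pi.sub_apply, sub_smul, Finset.sum_sub_distrib,
    extend Finset.subset_union_left hc₁ (h₁ X hX), extend Finset.subset_union_right hc₂ (h₂ X hX),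
    sub_self]

theorem IndependentOver.eq_of_isBCoherentDiff {R : Subring ℝ} {S₁ S₂ : Finset ι}
    {c₁ c₂ : ι → ℝ} (hv : IndependentOver R B v) (hc₁R : ∀ i, c₁ i ∈ R) (hc₂R : ∀ i, c₂ i ∈ R)
    (hc₁ : ∀ i ∉ S₁, c₁ i = 0) (hc₂ : ∀ i ∉ S₂, c₂ i = 0)
    (h₁ : IsBCoherentDiff B a S₁ v c₁) (h₂ : IsBCoherentDiff B a S₂ v c₂) : c₁ = c₂ := by
  classical
  funext i
  by_cases hi : i ∈ S₁ ∪ S₂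
  · exact sub_eq_zero.1
      (hv.2 _ _ (fun i _ => R.sub_mem (hc₁R i) (hc₂R i)) (h₁.sub h₂ hc₁ hc₂) i hi)
  · rw [Finset.mem_union, not_or] at hi
    rw [hc₁ i hi.1, hc₂ i hi.2]

theorem PositiveBasisOver.exists_nonneg_isBCoherentDiff {R : Subring ℝ}
    (hv : PositiveBasisOver R B v) (ha : ∀ j, a j ∈ R) :
    ∃ (S : Finset ι) (c : ι → ℝ), (∀ i, c i ∈ R ∧ 0 ≤ c i) ∧ (∀ i ∉ S, c i = 0) ∧
      IsBCoherentDiff B a S v c := by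
  classical
  obtain ⟨S, c, hc, h⟩ := hv.2 a ha
  refine ⟨S, Set.indicator S c, fun i => ?_, fun i hi => Set.indicator_of_notMem hi c,
    isBCoherentDiff_iff.2 fun X hX => (isBCoherentDiff_iff.1 h X hX).trans
      (Finset.sum_congr rfl fun i hi => by rw [Set.indicator_of_mem (Finset.mem_coe.2 hi)])⟩
  by_cases hi : i ∈ S
  · simpa [hi] using hc i hi
  · simp [hi, R.zero_mem]

theorem IndependentOver.sum_mul_eq_single [DecidableEq ι] {R : Subring ℝ}
    {w : ι' → Fin n → ℝ} {S : ι → Finset ι'} {T : ι' → Finset ι} {c : ι → ι' → ℝ}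
    {d : ι' → ι → ℝ} (hv : IndependentOver R B v) (hc : ∀ i j, c i j ∈ R)
    (hd : ∀ j i, d j i ∈ R) (hdT : ∀ j, ∀ i ∉ T j, d j i = 0)
    (hvw : ∀ i, IsBCoherentDiff B (v i) (S i) w (c i))
    (hwv : ∀ j, IsBCoherentDiff B (w j) (T j) v (d j)) (i k : ι) :
    ∑ j ∈ S i, c i j * d j k = (Pi.single i 1 : ι → ℝ) k := by
  refine congrFun (hv.eq_of_isBCoherentDiff
    (fun k => Subring.sum_mem _ fun j _ => R.mul_mem (hc i j) (hd j k)) (fun k => ?_)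
    (fun k hk => Finset.sum_eq_zero fun j hj => ?_) (fun k hk => ?_)
    ((hvw i).comp (fun j _ => hwv j) hdT) (isBCoherentDiff_single v i)) k
  · rcases eq_or_ne k i with rfl | hk
    · simp [R.one_mem]
    · simp [hk, R.zero_mem]
  · rw [hdT j k fun hk' => hk (Finset.mem_biUnion.2 ⟨j, hj, hk'⟩), mul_zero]
  · exact Pi.single_eq_of_ne (by simpa using hk) 1

end Coherence

theorem positiveBasisOver_unique_general {n : ℕ} (B : Matrix (Fin n) (Fin n) ℤ)
    (R : Subring ℝ)
    {I J : Type} (b : I → Fin n → ℝ) (b' : J → Fin n → ℝ)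
    (hb : PositiveBasisOver R B b) (hb' : PositiveBasisOver R B b') :
    ∃ σ : I ≃ J, ∀ i : I, ∃ u : ℝ, 0 < u ∧ u ∈ R ∧ u⁻¹ ∈ R ∧ b' (σ i) = u • b i := by
  classical
  choose S c hc hcS hbc using fun i => hb'.exists_nonneg_isBCoherentDiff (hb.1.1.1 i)
  choose T d hd hdT hb'd using fun j => hb.exists_nonneg_isBCoherentDiff (hb'.1.1.1 j)
  obtain ⟨σ, hσ⟩ := exists_equiv_of_sum_mul_eq_single (fun i j => (hc i j).2)
    (fun j i => (hd j i).2) hcS hdT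
    (hb.1.2.sum_mul_eq_single (fun i j => (hc i j).1) (fun j i => (hd j i).1) hdT hbc hb'd)
    (hb'.1.2.sum_mul_eq_single (fun j i => (hd j i).1) (fun i j => (hc i j).1) hcS hb'd hbc)
  refine ⟨σ, fun i => ?_⟩
  obtain ⟨hpos, hmul, hzero⟩ := hσ i
  refine ⟨d (σ i) i, hpos, (hd _ _).1, ?_, ?_⟩
  · rw [inv_eq_of_mul_eq_one_left hmul]
    exact (hc _ _).1
  · rw [(hb'd (σ i)).eq_sum, Finset.sum_eq_single i (fun k _ hk => by rw [hzero k hk, zero_smul])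
      fun hi => by rw [hdT _ i hi, zero_smul]]

/-- For `R` one of ℤ, ℚ, ℝ, any two positive `R`-bases for `B` agree up
to scaling each basis element by a positive unit of `R`. -/
theorem positiveBasisOver_unique {n : ℕ} (hn : 1 ≤ n) (B : Matrix (Fin n) (Fin n) ℤ)
    (hB : IsExchangeMatrix B) (R : Subring ℝ)
    (hR : R = intSR ∨ R = ratSR ∨ R = (⊤ : Subring ℝ))
    {I J : Type} (b : I → Fin n → ℝ) (b' : J → Fin n → ℝ)
    (hb : PositiveBasisOver R B b) (hb' : PositiveBasisOver R B b') :
    ∃ σ : I ≃ J, ∀ i : I, ∃ u : ℝ, 0 < u ∧ u ∈ R ∧ u⁻¹ ∈ R ∧ b' (σ i) = u • b i :=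
  positiveBasisOver_unique_general B R b b' hb hb'

end MutationFanPaper
end
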